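/- arXiv:1112.2861 — 7 statements merged into one kernel-verified Lean document; each statement's English description precedes it below -/
import Mathlib

section
/- For every n ≥ 1, every function f : 2^N → {0,1} with f(∅) = 0 on the voter set N = {1,…,n} is n-roughly weighted. Moreover, for every n ≥ 2 there exists such a function f (namely the one with f({i}) = 1 for all i ∈ N, f(N) = 0) that is not α-roughly weighted for any real number α with 1 ≤ α < n. Consequently the maximum of the critical threshold value μ(f) over all functions f : 2^N → {0,1} with f(∅) = 0 equals n. -/
open Finset

/-- `f` is `α`-roughly weighted: there are real weights such that every winning
coalition has weight at least `1` and every losing coalition weight at most `α`. -/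
def RoughlyWeighted {n : ℕ} (f : Finset (Fin n) → Bool) (α : ℝ) : Prop :=
  ∃ w : Fin n → ℝ,
    (∀ S : Finset (Fin n), f S = true → 1 ≤ ∑ i ∈ S, w i) ∧
    (∀ S : Finset (Fin n), f S = false → ∑ i ∈ S, w i ≤ α)

/-- The critical threshold value `μ(f)`: the smallest `α ≥ 1` such that `f` is
`α`-roughly weighted. -/
noncomputable def mu {n : ℕ} (f : Finset (Fin n) → Bool) : ℝ :=
  sInf {α : ℝ | 1 ≤ α ∧ RoughlyWeighted f α}

/-- A simple game: monotone, the empty coalition loses and the grand coalition wins. -/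
def SimpleGame {n : ℕ} (χ : Finset (Fin n) → Bool) : Prop :=
  χ ∅ = false ∧ χ Finset.univ = true ∧
    ∀ S T : Finset (Fin n), S ⊆ T → χ S = true → χ T = true

section RoughlyWeighted

variable {n : ℕ} {f : Finset (Fin n) → Bool}

theorem roughlyWeighted_natCast (hf : f ∅ = false) : RoughlyWeighted f n := by
  refine ⟨fun _ => 1, fun S hS => ?_, fun S _ => ?_⟩
  · have hS : S.Nonempty := nonempty_iff_ne_empty.mpr (by rintro rfl; simp [hf] at hS)
    simpa using hS.card_pos
  · simpa using card_le_univ S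

theorem natCast_le_of_roughlyWeighted_of_singletons_win {α : ℝ}
    (hsingle : ∀ i, f {i} = true) (huniv : f univ = false) (h : RoughlyWeighted f α) :
    (n : ℝ) ≤ α := by
  obtain ⟨w, hwin, hlose⟩ := h
  calc (n : ℝ) = ∑ _i : Fin n, (1 : ℝ) := by simp
    _ ≤ ∑ i, w i := sum_le_sum fun i _ => by simpa using hwin {i} (hsingle i)
    _ ≤ α := hlose univ huniv

theorem mu_le {α : ℝ} (hα : 1 ≤ α) (h : RoughlyWeighted f α) : mu f ≤ α :=
  csInf_le ⟨1, fun _ hβ => hβ.1⟩ ⟨hα, h⟩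

theorem le_mu {β : ℝ} (hne : ∃ α, 1 ≤ α ∧ RoughlyWeighted f α)
    (hle : ∀ α, 1 ≤ α → RoughlyWeighted f α → β ≤ α) : β ≤ mu f :=
  le_csInf hne fun α hα => hle α hα.1 hα.2

end RoughlyWeighted

section SingletonsOnly

def singletonsOnly (n : ℕ) (S : Finset (Fin n)) : Bool := decide (S.card = 1)

variable {n : ℕ}

theorem singletonsOnly_empty : singletonsOnly n ∅ = false := by
  simp [singletonsOnly]

theorem singletonsOnly_singleton (i : Fin n) : singletonsOnly n {i} = true := by
  simp [singletonsOnly]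

theorem singletonsOnly_univ (hn : 2 ≤ n) : singletonsOnly n univ = false := by
  simp only [singletonsOnly, card_univ, Fintype.card_fin, decide_eq_false_iff_not]
  omega

/-- For `n = 1` the bound is `1 ≤ α`, built into `mu`; for `n ≥ 2` the grand coalition
loses although all singletons win. -/
theorem natCast_le_mu_singletonsOnly (hn : 1 ≤ n) : (n : ℝ) ≤ mu (singletonsOnly n) := by
  refine le_mu ⟨n, by exact_mod_cast hn, roughlyWeighted_natCast singletonsOnly_empty⟩
    fun α hα h => ?_
  rcases hn.eq_or_lt with rfl | hn2
  · simpa using hα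
  · exact natCast_le_of_roughlyWeighted_of_singletons_win singletonsOnly_singleton
      (singletonsOnly_univ hn2) h

end SingletonsOnly

/-- every function with `f ∅ = 0` on `n ≥ 1` voters is `n`-roughly
weighted; for `n ≥ 2` the function with all singletons winning and the grand
coalition losing is not `α`-roughly weighted for any `1 ≤ α < n`; consequently the
maximum critical threshold value over such functions equals `n`. -/
theorem boolean_max_critical_threshold (n : ℕ) (hn : 1 ≤ n) :
    (∀ f : Finset (Fin n) → Bool, f ∅ = false → RoughlyWeighted f (n : ℝ)) ∧
    (2 ≤ n → ∃ f : Finset (Fin n) → Bool, f ∅ = false ∧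
      (∀ i : Fin n, f {i} = true) ∧ f Finset.univ = false ∧
      ∀ α : ℝ, 1 ≤ α → α < (n : ℝ) → ¬ RoughlyWeighted f α) ∧
    IsGreatest {α : ℝ | ∃ f : Finset (Fin n) → Bool, f ∅ = false ∧ α = mu f}
      (n : ℝ) := by
  have hn1 : (1 : ℝ) ≤ n := by exact_mod_cast hn
  refine ⟨fun f hf => roughlyWeighted_natCast hf, fun hn2 => ?_, ?_, ?_⟩
  · refine ⟨singletonsOnly n, singletonsOnly_empty, singletonsOnly_singleton,
      singletonsOnly_univ hn2, fun α _ hα h => hα.not_ge ?_⟩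
    exact natCast_le_of_roughlyWeighted_of_singletons_win singletonsOnly_singleton
      (singletonsOnly_univ hn2) h
  · exact ⟨singletonsOnly n, singletonsOnly_empty, le_antisymm
      (natCast_le_mu_singletonsOnly hn)
      (mu_le hn1 (roughlyWeighted_natCast singletonsOnly_empty))⟩
  · rintro _ ⟨f, hf, rfl⟩
    exact mu_le hn1 (roughlyWeighted_natCast hf)
end

section
/- Let n ≥ 2 and let f : 2^N → {0,1} satisfy f(∅) = 0 and f(N) = 1, where N = {1,…,n}. Then f is (n−1)-roughly weighted, i.e. μ(f) ≤ n − 1. Moreover, for every n ≥ 3 this bound is tight: there exists such a function f with μ(f) = n − 1. -/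
open Finset

/-
Upper bound: give every voter weight 1. A winning coalition is nonempty and a losing one is not
the grand coalition, so their weights are at least 1 and at most n - 1 respectively.
Tightness: let exactly the singletons and the grand coalition win. Every weight is then at least 1,
so the losing coalition of all voters but one has weight at least n - 1.
-/

theorem roughlyWeighted_natCast_sub_one {n : ℕ} (f : Finset (Fin n) → Bool) (h0 : f ∅ = false)
    (h1 : f univ = true) : RoughlyWeighted f ((n : ℝ) - 1) := by
  refine ⟨fun _ => 1, fun S hS => ?_, fun S hS => ?_⟩
  · have hne : S.Nonempty := nonempty_iff_ne_empty.2 (by rintro rfl; simp [h0] at hS)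
    simpa using hne.card_pos
  · have hlt : #S < n := by
      simpa using (card_lt_iff_ne_univ S).2 (by rintro rfl; simp [h1] at hS)
    have hlt' : (#S : ℝ) + 1 ≤ n := by exact_mod_cast hlt
    simp only [sum_const, nsmul_eq_mul, mul_one]
    linarith

theorem RoughlyWeighted.card_le {n : ℕ} {f : Finset (Fin n) → Bool} {α : ℝ}
    (hf : RoughlyWeighted f α) (hsingleton : ∀ i, f {i} = true) {S : Finset (Fin n)}
    (hS : f S = false) : (#S : ℝ) ≤ α := by
  obtain ⟨w, hwin, hlose⟩ := hf
  calc (#S : ℝ) = ∑ _i ∈ S, (1 : ℝ) := by simp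
    _ ≤ ∑ i ∈ S, w i := sum_le_sum fun i _ => by simpa using hwin {i} (hsingleton i)
    _ ≤ α := hlose S hS

def singletonOrUniv (n : ℕ) (S : Finset (Fin n)) : Bool :=
  decide (#S = 1) || decide (S = univ)

theorem singletonOrUniv_empty {n : ℕ} (hn : n ≠ 0) : singletonOrUniv n ∅ = false := by
  have : Nonempty (Fin n) := Fin.pos_iff_nonempty.1 (Nat.pos_of_ne_zero hn)
  simp [singletonOrUniv, univ_nonempty.ne_empty.symm]

theorem singletonOrUniv_univ (n : ℕ) : singletonOrUniv n univ = true := by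
  simp [singletonOrUniv]

theorem singletonOrUniv_singleton {n : ℕ} (i : Fin n) : singletonOrUniv n {i} = true := by
  simp [singletonOrUniv]

theorem singletonOrUniv_univ_erase {n : ℕ} (hn : 3 ≤ n) (i : Fin n) :
    singletonOrUniv n (univ.erase i) = false := by
  have hcard : #(univ.erase i) ≠ 1 := by
    rw [card_erase_of_mem (mem_univ i), card_univ, Fintype.card_fin]; omega
  have hne : univ.erase i ≠ univ := by simp [erase_eq_self]
  simp only [singletonOrUniv, hcard, hne, decide_false, Bool.or_false]

theorem critical_threshold_grand_coalition_winning_general (n : ℕ) :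
    (∀ f : Finset (Fin n) → Bool, f ∅ = false → f Finset.univ = true →
      RoughlyWeighted f ((n : ℝ) - 1)) ∧
    (3 ≤ n → ∃ f : Finset (Fin n) → Bool, f ∅ = false ∧ f Finset.univ = true ∧
      mu f = (n : ℝ) - 1) := by
  refine ⟨roughlyWeighted_natCast_sub_one, fun h3 => ?_⟩
  have h0 : singletonOrUniv n ∅ = false := singletonOrUniv_empty (by omega)
  refine ⟨singletonOrUniv n, h0, singletonOrUniv_univ n, IsLeast.csInf_eq ⟨?_, ?_⟩⟩
  · have hn : (3 : ℝ) ≤ n := by exact_mod_cast h3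
    exact ⟨by linarith, roughlyWeighted_natCast_sub_one _ h0 (singletonOrUniv_univ n)⟩
  · rintro α ⟨-, hα⟩
    have hle :=
      hα.card_le singletonOrUniv_singleton (singletonOrUniv_univ_erase h3 ⟨0, by omega⟩)
    rwa [card_erase_of_mem (mem_univ _), card_univ, Fintype.card_fin,
      Nat.cast_sub (by omega), Nat.cast_one] at hle

/-- every `f` with `f ∅ = 0` and `f N = 1` on `n ≥ 2` voters is
`(n-1)`-roughly weighted, and for `n ≥ 3` this bound is attained. -/
theorem critical_threshold_grand_coalition_winning (n : ℕ) (hn : 2 ≤ n) :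
    (∀ f : Finset (Fin n) → Bool, f ∅ = false → f Finset.univ = true →
      RoughlyWeighted f ((n : ℝ) - 1)) ∧
    (3 ≤ n → ∃ f : Finset (Fin n) → Bool, f ∅ = false ∧ f Finset.univ = true ∧
      mu f = (n : ℝ) - 1) :=
  critical_threshold_grand_coalition_winning_general n
end

section
/- Let χ be a complete simple game on n voters, numbered so that i ⊒ j whenever 1 ≤ i < j ≤ n, and let α ≥ 1 be such that χ is α-roughly weighted. Then there exist weights w_1 ≥ w_2 ≥ … ≥ w_n ≥ 0 such that ∑_{i∈S} w_i ≥ 1 for every winning coalition S and ∑_{i∈S} w_i ≤ α for every losing coalition S. -/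
open Finset

/-- Isbell's desirability relation: `i ⊒ j` iff replacing `j` by `i` in any
coalition containing `j` but not `i` preserves winning. -/
def Desirable {n : ℕ} (χ : Finset (Fin n) → Bool) (i j : Fin n) : Prop :=
  ∀ S : Finset (Fin n), j ∈ S → i ∉ S →
    χ S = true → χ (insert i (S.erase j)) = true

/-! Swapping the weights of two voters `p ⊒ q` with `w p ≤ w q` keeps a rough weighting
valid: a winning coalition that loses weight by the swap (it contains `q` but not `p`) now
weighs what the coalition with `q` replaced by `p`, winning by desirability, weighed before;
dually for losing coalitions. Among the rearrangements of a rough weighting, one maximising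
the sum of all prefix sums therefore has no inversion, since swapping an inversion would
raise that sum. Finally, negative weights can be cut off to `0`: winning coalitions only
gain, and a losing coalition then weighs what its losing subcoalition of nonnegative voters
weighed before. -/

theorem Finset.sum_comp_swap_sub {ι M : Type*} [DecidableEq ι] [AddCommGroup M]
    (s : Finset ι) (f : ι → M) (a b : ι) :
    ∑ i ∈ s, f (Equiv.swap a b i) - ∑ i ∈ s, f i =
      (if a ∈ s then f b - f a else 0) + (if b ∈ s then f a - f b else 0) := by
  rcases eq_or_ne a b with rfl | hab
  · simp
  set g : ι → M := fun i => if i ∈ s then f (Equiv.swap a b i) - f i else 0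
  calc ∑ i ∈ s, f (Equiv.swap a b i) - ∑ i ∈ s, f i = ∑ i ∈ s, g i := by
        rw [← sum_sub_distrib]
        exact sum_congr rfl fun i hi => (if_pos hi).symm
    _ = g a + g b := by
        refine sum_eq_add a b hab (fun c _ hc => ?_) (fun ha => if_neg ha) (fun hb => if_neg hb)
        simp [g, Equiv.swap_apply_of_ne_of_ne hc.1 hc.2]
    _ = _ := by simp [g]

theorem Finset.sum_insert_erase {ι M : Type*} [DecidableEq ι] [AddCommGroup M]
    {s : Finset ι} {a b : ι} (ha : a ∉ s) (hb : b ∈ s) (f : ι → M) :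
    ∑ i ∈ insert a (s.erase b), f i = ∑ i ∈ s, f i - f b + f a := by
  rw [sum_insert fun h => ha (mem_of_mem_erase h), sum_erase_eq_sub hb, add_comm]

section SortedPrefixSums

variable {ι : Type*} [Fintype ι] [LinearOrder ι] [LocallyFiniteOrderBot ι]

def sumPrefixSums (v : ι → ℝ) : ℝ :=
  ∑ k, ∑ i ∈ Iic k, v i

theorem sumPrefixSums_lt_comp_swap {v : ι → ℝ} {p q : ι} (hpq : p < q) (hv : v p < v q) :
    sumPrefixSums v < sumPrefixSums (v ∘ Equiv.swap p q) := by
  have hprefix (k : ι) : ∑ i ∈ Iic k, v (Equiv.swap p q i) - ∑ i ∈ Iic k, v i =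
      (if p ≤ k then v q - v p else 0) + (if q ≤ k then v p - v q else 0) := by
    simpa only [mem_Iic] using sum_comp_swap_sub (Iic k) v p q
  simp only [sumPrefixSums, Function.comp_apply]
  refine sum_lt_sum (fun k _ => ?_) ⟨p, mem_univ p, ?_⟩
  · have := hprefix k
    split_ifs at this with hpk hqk hqk
    · linarith
    · linarith
    · exact absurd (hpq.le.trans hqk) hpk
    · linarith
  · have := hprefix p
    rw [if_pos le_rfl, if_neg hpq.not_ge] at this
    linarith

end SortedPrefixSums

section RoughWeighting

variable {n : ℕ} {χ : Finset (Fin n) → Bool} {α : ℝ}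

def IsRoughWeighting (χ : Finset (Fin n) → Bool) (α : ℝ) (w : Fin n → ℝ) : Prop :=
  (∀ S : Finset (Fin n), χ S = true → 1 ≤ ∑ i ∈ S, w i) ∧
    (∀ S : Finset (Fin n), χ S = false → ∑ i ∈ S, w i ≤ α)

theorem Desirable.eq_false_insert_erase {p q : Fin n} (hd : Desirable χ p q)
    {S : Finset (Fin n)} (hp : p ∈ S) (hq : q ∉ S) (hS : χ S = false) :
    χ (insert q (S.erase p)) = false := by
  have hqS : q ∉ S.erase p := fun h => hq (mem_of_mem_erase h)
  have hpT : p ∉ insert q (S.erase p) := by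
    simp [ne_of_mem_of_not_mem hp hq]
  by_contra hT
  have hwin := hd _ (mem_insert_self q _) hpT (Bool.not_eq_false _ ▸ hT)
  rw [erase_insert hqS, insert_erase hp, hS] at hwin
  exact Bool.false_ne_true hwin

theorem IsRoughWeighting.comp_swap {w : Fin n → ℝ} {p q : Fin n} (hd : Desirable χ p q)
    (hpq : w p ≤ w q) (hw : IsRoughWeighting χ α w) :
    IsRoughWeighting χ α (w ∘ Equiv.swap p q) := by
  constructor
  · intro S hS
    have hswap := sum_comp_swap_sub S w p q
    have hwin := hw.1 S hS
    simp only [Function.comp_apply]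
    by_cases hp : p ∈ S <;> by_cases hq : q ∈ S <;> simp only [hp, hq, if_true, if_false] at hswap
    · linarith
    · linarith
    · have hswapped := hw.1 _ (hd S hq hp hS)
      rw [sum_insert_erase hp hq] at hswapped
      linarith
    · linarith
  · intro S hS
    have hswap := sum_comp_swap_sub S w p q
    have hlose := hw.2 S hS
    simp only [Function.comp_apply]
    by_cases hp : p ∈ S <;> by_cases hq : q ∈ S <;> simp only [hp, hq, if_true, if_false] at hswap
    · linarith
    · have hswapped := hw.2 _ (hd.eq_false_insert_erase hp hq hS)
      rw [sum_insert_erase hq hp] at hswapped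
      linarith
    · linarith
    · linarith

theorem IsRoughWeighting.exists_antitone {w : Fin n → ℝ}
    (hsorted : ∀ i j : Fin n, i < j → Desirable χ i j) (hw : IsRoughWeighting χ α w) :
    ∃ w' : Fin n → ℝ, Antitone w' ∧ IsRoughWeighting χ α w' := by
  classical
  obtain ⟨σ, hσ, hmax⟩ :=
    (univ.filter fun σ : Equiv.Perm (Fin n) => IsRoughWeighting χ α (w ∘ σ)).exists_max_image
      (fun σ => sumPrefixSums (w ∘ σ)) ⟨1, by simpa using hw⟩
  rw [mem_filter] at hσ
  refine ⟨w ∘ σ, fun i j hij => ?_, hσ.2⟩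
  by_contra! hinv
  have hlt : i < j := lt_of_le_of_ne hij (by rintro rfl; exact lt_irrefl _ hinv)
  have hswapped : IsRoughWeighting χ α (w ∘ ⇑(σ * Equiv.swap i j)) := by
    rw [Equiv.Perm.coe_mul, ← Function.comp_assoc]
    exact hσ.2.comp_swap (hsorted i j hlt) hinv.le
  have hle := hmax _ (mem_filter.2 ⟨mem_univ _, hswapped⟩)
  rw [Equiv.Perm.coe_mul, ← Function.comp_assoc] at hle
  exact (sumPrefixSums_lt_comp_swap hlt hinv).not_ge hle

theorem IsRoughWeighting.posPart {w : Fin n → ℝ}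
    (hmono : ∀ S T : Finset (Fin n), S ⊆ T → χ S = true → χ T = true)
    (hw : IsRoughWeighting χ α w) : IsRoughWeighting χ α w⁺ := by
  classical
  refine ⟨fun S hS => (hw.1 S hS).trans (sum_le_sum fun i _ => ?_), fun S hS => ?_⟩
  · rw [Pi.posPart_apply]
    exact le_posPart _
  · have hsum : ∑ i ∈ S, (w⁺ : Fin n → ℝ) i = ∑ i ∈ S.filter (fun i => 0 ≤ w i), w i := by
      rw [sum_filter]
      exact sum_congr rfl fun i _ => by rw [Pi.posPart_apply, posPart_eq_ite]
    have hlose : χ (S.filter fun i => 0 ≤ w i) = false := by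
      by_contra hwin
      simp [hmono _ S (filter_subset _ _) (Bool.not_eq_false _ ▸ hwin)] at hS
    rw [hsum]
    exact hw.2 _ hlose

end RoughWeighting

theorem complete_simple_game_monotone_weights_general (n : ℕ) (χ : Finset (Fin n) → Bool)
    (hχ : SimpleGame χ)
    (hsorted : ∀ i j : Fin n, i < j → Desirable χ i j)
    (α : ℝ) (h : RoughlyWeighted χ α) :
    ∃ w : Fin n → ℝ, (∀ i j : Fin n, i ≤ j → w j ≤ w i) ∧ (∀ i : Fin n, 0 ≤ w i) ∧
      (∀ S : Finset (Fin n), χ S = true → 1 ≤ ∑ i ∈ S, w i) ∧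
      (∀ S : Finset (Fin n), χ S = false → ∑ i ∈ S, w i ≤ α) := by
  obtain ⟨w, hw⟩ : ∃ w, IsRoughWeighting χ α w := h
  obtain ⟨w', hanti, hw'⟩ := hw.exists_antitone hsorted
  obtain ⟨hwin, hlose⟩ := hw'.posPart hχ.2.2
  exact ⟨w'⁺, fun i j hij => posPart_mono (hanti hij), fun i => posPart_nonneg (w' i),
    hwin, hlose⟩

/-- an `α`-roughly weighted complete simple game (voters numbered with
decreasing desirability) admits an `α`-rough weighting with
`w 1 ≥ w 2 ≥ … ≥ w n ≥ 0`. -/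
theorem complete_simple_game_monotone_weights (n : ℕ) (χ : Finset (Fin n) → Bool)
    (hχ : SimpleGame χ)
    (hcomplete : ∀ i j : Fin n, Desirable χ i j ∨ Desirable χ j i)
    (hsorted : ∀ i j : Fin n, i < j → Desirable χ i j)
    (α : ℝ) (hα : 1 ≤ α) (h : RoughlyWeighted χ α) :
    ∃ w : Fin n → ℝ, (∀ i j : Fin n, i ≤ j → w j ≤ w i) ∧ (∀ i : Fin n, 0 ≤ w i) ∧
      (∀ S : Finset (Fin n), χ S = true → 1 ≤ ∑ i ∈ S, w i) ∧
      (∀ S : Finset (Fin n), χ S = false → ∑ i ∈ S, w i ≤ α) :=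
  complete_simple_game_monotone_weights_general n χ hχ hsorted α h
end

section
/- Let χ be a simple game on n voters, let W' be a set of winning coalitions of χ and L' a set of losing coalitions of χ, and suppose there are non-negative reals (u_S)_{S∈W'} and (v_T)_{T∈L'} satisfying ∑_{S∈W', i∈S} u_S − ∑_{T∈L', i∈T} v_T ≤ 0 for every voter i ∈ N and ∑_{T∈L'} v_T ≤ 1. Then for every real α ≥ 1 such that χ is α-roughly weighted, one has α ≥ ∑_{S∈W'} u_S; in particular μ(χ) ≥ ∑_{S∈W'} u_S. -/
open Finset

/-!
Weak LP duality. If `w` witnesses that `χ` is `α`-roughly weighted, then by monotonicity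
so does its positive part, so we may take `w ≥ 0`. Pairing `w` with the dual solution gives
`∑ u ≤ ∑_S u_S w(S) = ∑_i (∑_{S ∋ i} u_S) w_i ≤ ∑_i (∑_{T ∋ i} v_T) w_i = ∑_T v_T w(T) ≤ α ∑ v ≤ α`.
-/

theorem SimpleGame.monotone {n : ℕ} {χ : Finset (Fin n) → Bool} (hχ : SimpleGame χ) :
    Monotone χ :=
  fun S T hST => Bool.le_iff_imp.2 (hχ.2.2 S T hST)

theorem RoughlyWeighted.mono {n : ℕ} {f : Finset (Fin n) → Bool} {α β : ℝ}
    (h : RoughlyWeighted f α) (hαβ : α ≤ β) : RoughlyWeighted f β :=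
  let ⟨w, hwin, hlose⟩ := h
  ⟨w, hwin, fun S hS => (hlose S hS).trans hαβ⟩

theorem roughlyWeighted_card {n : ℕ} {f : Finset (Fin n) → Bool} (hf : f ∅ = false) :
    RoughlyWeighted f n := by
  refine ⟨fun _ => 1, fun S hS => ?_, fun S _ => ?_⟩
  · have hS : S.Nonempty := nonempty_iff_ne_empty.2 fun h => by simp [h, hf] at hS
    simpa using hS.card_pos
  · simpa using card_le_univ S

theorem sum_posPart_eq_sum_filter_pos {ι : Type*} (s : Finset ι) (w : ι → ℝ) :
    ∑ i ∈ s, (w i)⁺ = ∑ i ∈ s with 0 < w i, w i := by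
  rw [sum_filter]
  exact sum_congr rfl fun i _ => max_def_lt' (w i) 0

theorem RoughlyWeighted.exists_nonneg_weights {n : ℕ} {f : Finset (Fin n) → Bool} {α : ℝ}
    (h : RoughlyWeighted f α) (hf : Monotone f) :
    ∃ w : Fin n → ℝ, (∀ i, 0 ≤ w i) ∧
      (∀ S : Finset (Fin n), f S = true → 1 ≤ ∑ i ∈ S, w i) ∧
      (∀ S : Finset (Fin n), f S = false → ∑ i ∈ S, w i ≤ α) := by
  obtain ⟨w, hwin, hlose⟩ := h
  refine ⟨fun i => (w i)⁺, fun i => posPart_nonneg _, fun S hS => ?_, fun S hS => ?_⟩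
  · exact (hwin S hS).trans (sum_le_sum fun i _ => le_posPart _)
  · have hpos : f (S.filter (0 < w ·)) = false :=
      Bool.eq_false_of_le_false (hS ▸ hf (filter_subset _ S))
    rw [sum_posPart_eq_sum_filter_pos]
    exact hlose _ hpos

theorem sum_mul_sum_eq_sum_sum_filter_mem_mul {ι : Type*} [Fintype ι] [DecidableEq ι]
    (C : Finset (Finset ι)) (c : Finset ι → ℝ) (w : ι → ℝ) :
    ∑ S ∈ C, c S * ∑ i ∈ S, w i = ∑ i, (∑ S ∈ C.filter (i ∈ ·), c S) * w i := by
  simp_rw [mul_sum, sum_mul]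
  exact sum_comm' fun S i => by simp

theorem sum_le_of_dual_feasible {ι : Type*} [Fintype ι] [DecidableEq ι]
    {W' L' : Finset (Finset ι)} {u v : Finset ι → ℝ} {w : ι → ℝ} {α : ℝ}
    (hw : ∀ i, 0 ≤ w i) (hwin : ∀ S ∈ W', 1 ≤ ∑ i ∈ S, w i)
    (hlose : ∀ T ∈ L', ∑ i ∈ T, w i ≤ α) (hα : 0 ≤ α)
    (hu : ∀ S ∈ W', 0 ≤ u S) (hv : ∀ T ∈ L', 0 ≤ v T)
    (hdual : ∀ i : ι,
      (∑ S ∈ W'.filter (fun S => i ∈ S), u S) -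
        (∑ T ∈ L'.filter (fun T => i ∈ T), v T) ≤ 0)
    (hvsum : ∑ T ∈ L', v T ≤ 1) :
    ∑ S ∈ W', u S ≤ α :=
  calc ∑ S ∈ W', u S
      ≤ ∑ S ∈ W', u S * ∑ i ∈ S, w i :=
        sum_le_sum fun S hS => le_mul_of_one_le_right (hu S hS) (hwin S hS)
    _ = ∑ i, (∑ S ∈ W'.filter (i ∈ ·), u S) * w i :=
        sum_mul_sum_eq_sum_sum_filter_mem_mul W' u w
    _ ≤ ∑ i, (∑ T ∈ L'.filter (i ∈ ·), v T) * w i :=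
        sum_le_sum fun i _ => mul_le_mul_of_nonneg_right (sub_nonpos.1 (hdual i)) (hw i)
    _ = ∑ T ∈ L', v T * ∑ i ∈ T, w i :=
        (sum_mul_sum_eq_sum_sum_filter_mem_mul L' v w).symm
    _ ≤ ∑ T ∈ L', v T * α :=
        sum_le_sum fun T hT => mul_le_mul_of_nonneg_left (hlose T hT) (hv T hT)
    _ = (∑ T ∈ L', v T) * α := (sum_mul _ _ _).symm
    _ ≤ α := mul_le_of_le_one_left hα hvsum

/-- a feasible dual solution `(u, v)` on subsets `W'` of winning and
`L'` of losing coalitions certifies the lower bound `∑_{S ∈ W'} u S ≤ μ(χ)`. -/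
theorem dual_certificate_lower_bound (n : ℕ) (χ : Finset (Fin n) → Bool)
    (hχ : SimpleGame χ) (W' L' : Finset (Finset (Fin n)))
    (hW : ∀ S ∈ W', χ S = true) (hL : ∀ T ∈ L', χ T = false)
    (u v : Finset (Fin n) → ℝ)
    (hu : ∀ S ∈ W', 0 ≤ u S) (hv : ∀ T ∈ L', 0 ≤ v T)
    (hdual : ∀ i : Fin n,
      (∑ S ∈ W'.filter (fun S => i ∈ S), u S) -
        (∑ T ∈ L'.filter (fun T => i ∈ T), v T) ≤ 0)
    (hvsum : ∑ T ∈ L', v T ≤ 1) :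
    (∀ α : ℝ, 1 ≤ α → RoughlyWeighted χ α → ∑ S ∈ W', u S ≤ α) ∧
    ∑ S ∈ W', u S ≤ mu χ := by
  have bound : ∀ α : ℝ, 1 ≤ α → RoughlyWeighted χ α → ∑ S ∈ W', u S ≤ α := by
    intro α hα hχα
    obtain ⟨w, hw, hwin, hlose⟩ := hχα.exists_nonneg_weights hχ.monotone
    exact sum_le_of_dual_feasible hw (fun S hS => hwin S (hW S hS))
      (fun T hT => hlose T (hL T hT)) (by linarith) hu hv hdual hvsum
  have hfeasible : ∃ α : ℝ, 1 ≤ α ∧ RoughlyWeighted χ α :=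
    ⟨max n 1, le_max_right _ _,
      (roughlyWeighted_card hχ.1).mono (le_max_left _ _)⟩
  exact ⟨bound, le_csInf hfeasible fun α hα => bound α hα.1 hα.2⟩
end

section
/- Let χ be a simple game on n voters that has a losing coalition of cardinality k. Then μ(χ) ≤ n − k; that is, χ is (n−k)-roughly weighted. -/
/-
Give weight `1` to every voter outside a losing coalition `S` and weight `0` to the members of
`S`. By monotonicity no winning coalition is contained in `S`, so each one has weight at least `1`,
while any coalition weighs at most `|N \ S| = n - k`. Since the grand coalition wins, `k < n`, so
`n - k ≥ 1` is admissible in the infimum defining `μ`.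
-/

open Finset

theorem mu_le_of_roughlyWeighted {n : ℕ} {f : Finset (Fin n) → Bool} {α : ℝ} (hα : 1 ≤ α)
    (hf : RoughlyWeighted f α) : mu f ≤ α :=
  csInf_le ⟨1, fun _ hβ => hβ.1⟩ ⟨hα, hf⟩

theorem roughlyWeighted_card_compl {n : ℕ} {f : Finset (Fin n) → Bool} {S : Finset (Fin n)}
    (hS : ∀ T, f T = true → ¬T ⊆ S) : RoughlyWeighted f #Sᶜ := by
  have hweight (T : Finset (Fin n)) : ∑ i ∈ T, (if i ∉ S then (1 : ℝ) else 0) = #(T \ S) := by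
    rw [sum_boole, sdiff_eq_filter]
  refine ⟨fun i => if i ∉ S then 1 else 0, fun T hT => ?_, fun T _ => ?_⟩
  · rw [hweight, Nat.one_le_cast, one_le_card]
    exact sdiff_nonempty.mpr (hS T hT)
  · rw [hweight, compl_eq_univ_sdiff]
    exact_mod_cast card_le_card (sdiff_subset_sdiff (subset_univ T) le_rfl)

namespace SimpleGame

variable {n : ℕ} {χ : Finset (Fin n) → Bool} {S : Finset (Fin n)}

theorem not_subset_of_losing (hχ : SimpleGame χ) (hS : χ S = false) (T : Finset (Fin n))
    (hT : χ T = true) : ¬T ⊆ S := fun hTS => by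
  simp [hχ.2.2 T S hTS hT] at hS

theorem card_lt_of_losing (hχ : SimpleGame χ) (hS : χ S = false) : #S < n := by
  have hne : S ≠ univ := by
    rintro rfl
    simp [hχ.2.1] at hS
  simpa using (card_lt_iff_ne_univ S).mpr hne

end SimpleGame

/-- a simple game having a losing coalition of cardinality `k` is
`(n - k)`-roughly weighted, so `μ(χ) ≤ n - k`. -/
theorem critical_threshold_le_of_losing_coalition (n k : ℕ)
    (χ : Finset (Fin n) → Bool) (hχ : SimpleGame χ)
    (S : Finset (Fin n)) (hS : χ S = false) (hcard : S.card = k) :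
    mu χ ≤ (n : ℝ) - (k : ℝ) ∧ RoughlyWeighted χ ((n : ℝ) - (k : ℝ)) := by
  subst hcard
  have hlt : #S < n := hχ.card_lt_of_losing hS
  have hcompl : (#Sᶜ : ℝ) = n - #S := by
    rw [card_compl, Fintype.card_fin, Nat.cast_sub hlt.le]
  have hrw : RoughlyWeighted χ (n - #S) :=
    hcompl ▸ roughlyWeighted_card_compl (hχ.not_subset_of_losing hS)
  have hone : (1 : ℝ) ≤ n - #S := by
    rw [le_sub_iff_add_le']
    exact_mod_cast hlt
  exact ⟨mu_le_of_roughlyWeighted hone hrw, hrw⟩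
end

section
/- Let n ≥ 2 and let χ be a simple game on n voters that has a winning coalition of cardinality one. Then μ(χ) ≤ c_S(n−1), where c_S(m) denotes the maximum of μ(χ') over all simple games χ' on m voters. Equivalently: for every real α ≥ 1, if every simple game on n−1 voters is α-roughly weighted, then χ is α-roughly weighted. -/
/-!
If voter `i` wins alone, every coalition containing `i` wins, so only coalitions avoiding `i`
can lose. If `N ∖ {i}` loses as well, `i` is a dictator and the weight `1` on `i` alone shows
that the game is `1`-roughly weighted. Otherwise deleting `i` leaves a simple game on `n - 1`
voters. Its `α`-rough weights may be taken nonnegative, and giving `i` the weight `α ≥ 1` on top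
of them makes every coalition containing `i` heavy enough, while the losing coalitions, which
avoid `i`, keep their weights.
-/

open Finset

/-- `c_S(m)`: the maximum critical threshold value among simple games on `m` voters. -/
noncomputable def cS (m : ℕ) : ℝ :=
  sSup {α : ℝ | ∃ χ : Finset (Fin m) → Bool, SimpleGame χ ∧ α = mu χ}

namespace RoughlyWeighted

variable {k : ℕ} {f : Finset (Fin k) → Bool} {α : ℝ}

/-- Raising negative weights to `0` makes a coalition weigh as much as its subcoalition of
nonnegatively weighted voters, which loses whenever the coalition does. -/
lemma exists_nonneg_weights_s12 (hmono : ∀ S T, S ⊆ T → f S = true → f T = true)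
    (h : RoughlyWeighted f α) :
    ∃ w : Fin k → ℝ, (∀ j, 0 ≤ w j) ∧
      (∀ S, f S = true → 1 ≤ ∑ j ∈ S, w j) ∧
      (∀ S, f S = false → ∑ j ∈ S, w j ≤ α) := by
  obtain ⟨w, hwin, hlose⟩ := h
  refine ⟨fun j => max (w j) 0, fun j => le_max_right _ _,
    fun S hS => (hwin S hS).trans (sum_le_sum fun j _ => le_max_left _ _), fun S hS => ?_⟩
  have hpos : ∑ j ∈ S, max (w j) 0 = ∑ j ∈ S with 0 ≤ w j, w j := by
    rw [sum_filter]
    exact sum_congr rfl fun j _ => by split_ifs with h <;> simp [h, le_of_not_ge]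
  rw [hpos]
  refine hlose _ (Bool.eq_false_iff.mpr fun hwin' => ?_)
  simp [hmono _ _ (filter_subset _ _) hwin'] at hS

lemma of_forall_mem (i : Fin k) (hdict : ∀ S, f S = true → i ∈ S) (hα : 1 ≤ α) :
    RoughlyWeighted f α :=
  ⟨Pi.single i 1,
    fun S hS => by simp [sum_pi_single', hdict S hS],
    fun S _ => by rw [sum_pi_single']; split_ifs <;> linarith⟩

end RoughlyWeighted

namespace SimpleGame

variable {k : ℕ} {χ : Finset (Fin k) → Bool}

lemma one_le_card (hχ : SimpleGame χ) : 1 ≤ k := by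
  rcases Nat.eq_zero_or_pos k with rfl | hk
  · simpa [univ_eq_empty, hχ.1] using hχ.2.1
  · exact hk

/-- Unit weights: winning coalitions are nonempty and no coalition has more than `k` members. -/
lemma roughlyWeighted_card (hχ : SimpleGame χ) : RoughlyWeighted χ k := by
  refine ⟨fun _ => 1, fun S hS => ?_, fun S _ => ?_⟩
  · have hne : S.Nonempty := nonempty_iff_ne_empty.mpr fun h => by simp [h, hχ.1] at hS
    simpa using hne.card_pos
  · simpa using card_le_univ S

lemma mu_le_card (hχ : SimpleGame χ) : mu χ ≤ k :=
  csInf_le ⟨1, fun _ hα => hα.1⟩ ⟨mod_cast hχ.one_le_card, hχ.roughlyWeighted_card⟩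

lemma mu_le_cS (hχ : SimpleGame χ) : mu χ ≤ cS k :=
  le_csSup ⟨k, by rintro _ ⟨χ', hχ', rfl⟩; exact hχ'.mu_le_card⟩ ⟨χ, hχ, rfl⟩

end SimpleGame

lemma exists_simpleGame {m : ℕ} (hm : 0 < m) : ∃ χ : Finset (Fin m) → Bool, SimpleGame χ := by
  have : Nonempty (Fin m) := ⟨⟨0, hm⟩⟩
  exact ⟨fun S => decide S.Nonempty, by simp, by simp [univ_nonempty],
    fun S T hST hS => by simpa using (of_decide_eq_true hS).mono hST⟩

lemma mu_le_mu_of_roughlyWeighted_imp {k l : ℕ} {f : Finset (Fin k) → Bool}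
    {g : Finset (Fin l) → Bool} (hg : ∃ α, 1 ≤ α ∧ RoughlyWeighted g α)
    (himp : ∀ α, 1 ≤ α → RoughlyWeighted g α → RoughlyWeighted f α) : mu f ≤ mu g :=
  csInf_le_csInf ⟨1, fun _ hα => hα.1⟩ hg fun α hα => ⟨hα.1, himp α hα.1 hα.2⟩

/-- The game on the voters other than `i`, renumbered by `Fin.succAbove i`. -/
def deleteVoter {m : ℕ} (χ : Finset (Fin (m + 1)) → Bool) (i : Fin (m + 1)) :
    Finset (Fin m) → Bool :=
  fun S => χ (S.map i.succAboveEmb)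

section deleteVoter

variable {m : ℕ} {χ : Finset (Fin (m + 1)) → Bool} {i : Fin (m + 1)}

lemma map_succAboveEmb_preimage {S : Finset (Fin (m + 1))} (hiS : i ∉ S) :
    (S.preimage i.succAbove Fin.succAbove_right_injective.injOn).map i.succAboveEmb = S := by
  classical
  rw [map_eq_image, Fin.coe_succAboveEmb, image_preimage, filter_true_of_mem]
  intro j hj
  simpa using ne_of_mem_of_not_mem hj hiS

lemma deleteVoter_preimage {S : Finset (Fin (m + 1))} (hiS : i ∉ S) :
    deleteVoter χ i (S.preimage i.succAbove Fin.succAbove_right_injective.injOn) = χ S := by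
  rw [deleteVoter, map_succAboveEmb_preimage hiS]

lemma sum_preimage_succAbove {M : Type*} [AddCommMonoid M] (v : Fin (m + 1) → M)
    {S : Finset (Fin (m + 1))} (hiS : i ∉ S) :
    ∑ k ∈ S.preimage i.succAbove Fin.succAbove_right_injective.injOn, v (i.succAbove k) =
      ∑ j ∈ S, v j :=
  sum_preimage _ _ _ _ fun _ hj hrange =>
    (hrange (by simpa using ne_of_mem_of_not_mem hj hiS)).elim

lemma deleteVoter_mono (hmono : ∀ S T, S ⊆ T → χ S = true → χ T = true) :
    ∀ S T, S ⊆ T → deleteVoter χ i S = true → deleteVoter χ i T = true :=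
  fun _ _ hST => hmono _ _ (map_subset_map.mpr hST)

lemma SimpleGame.deleteVoter (hχ : SimpleGame χ) (hcompl : χ (univ.map i.succAboveEmb) = true) :
    SimpleGame (deleteVoter χ i) :=
  ⟨by simpa [_root_.deleteVoter] using hχ.1, hcompl, deleteVoter_mono hχ.2.2⟩

lemma RoughlyWeighted.of_deleteVoter (hχ : SimpleGame χ) (hi : χ {i} = true) {α : ℝ}
    (hα : 1 ≤ α) (h : RoughlyWeighted (deleteVoter χ i) α) : RoughlyWeighted χ α := by
  obtain ⟨w, hw0, hwin, hlose⟩ := h.exists_nonneg_weights_s12 (deleteVoter_mono hχ.2.2)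
  set v : Fin (m + 1) → ℝ := Fin.insertNth i α w
  have hv0 : ∀ j, 0 ≤ v j := by
    refine (Fin.forall_iff_succAbove i).mpr ⟨?_, fun j => ?_⟩
    · simp only [v, Fin.insertNth_apply_same]; linarith
    · simpa only [v, Fin.insertNth_apply_succAbove] using hw0 j
  refine ⟨v, fun S hS => ?_, fun S hS => ?_⟩
  · by_cases hiS : i ∈ S
    · calc (1 : ℝ) ≤ v i := by simpa [v] using hα
        _ ≤ ∑ j ∈ S, v j := single_le_sum (fun j _ => hv0 j) hiS
    · rw [← sum_preimage_succAbove v hiS]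
      simp only [v, Fin.insertNth_apply_succAbove]
      exact hwin _ (by rwa [deleteVoter_preimage hiS])
  · have hiS : i ∉ S := fun hiS => by
      simp [hχ.2.2 _ _ (singleton_subset_iff.mpr hiS) hi] at hS
    rw [← sum_preimage_succAbove v hiS]
    simp only [v, Fin.insertNth_apply_succAbove]
    exact hlose _ (by rwa [deleteVoter_preimage hiS])

end deleteVoter

lemma exists_simpleGame_reduction {m : ℕ} (hm : 0 < m) {χ : Finset (Fin (m + 1)) → Bool}
    (hχ : SimpleGame χ) {i : Fin (m + 1)} (hi : χ {i} = true) :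
    ∃ χ' : Finset (Fin m) → Bool, SimpleGame χ' ∧
      ∀ α, 1 ≤ α → RoughlyWeighted χ' α → RoughlyWeighted χ α := by
  cases hcompl : χ (univ.map i.succAboveEmb) with
  | true => exact ⟨_, hχ.deleteVoter hcompl, fun α hα => .of_deleteVoter hχ hi hα⟩
  | false =>
    obtain ⟨χ', hχ'⟩ := exists_simpleGame hm
    refine ⟨χ', hχ', fun α hα _ => .of_forall_mem i (fun S hS => ?_) hα⟩
    by_contra hiS
    have hsub : S ⊆ univ.map i.succAboveEmb := by
      rw [← map_succAboveEmb_preimage hiS]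
      exact map_subset_map.mpr (subset_univ _)
    simp [hχ.2.2 _ _ hsub hS] at hcompl

/-- if a simple game on `n ≥ 2` voters has a winning singleton, then
`μ(χ) ≤ c_S(n-1)`; equivalently, any `α ≥ 1` such that all simple games on `n-1`
voters are `α`-roughly weighted also works for `χ`. -/
theorem reduction_winning_singleton (n : ℕ) (hn : 2 ≤ n)
    (χ : Finset (Fin n) → Bool) (hχ : SimpleGame χ)
    (i : Fin n) (hi : χ {i} = true) :
    mu χ ≤ cS (n - 1) ∧
    ∀ α : ℝ, 1 ≤ α →
      (∀ χ' : Finset (Fin (n - 1)) → Bool, SimpleGame χ' → RoughlyWeighted χ' α) →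
      RoughlyWeighted χ α := by
  obtain ⟨m, rfl⟩ : ∃ m, n = m + 1 := ⟨n - 1, by omega⟩
  obtain ⟨χ', hχ', himp⟩ := exists_simpleGame_reduction (by omega) hχ hi
  have hthreshold : ∃ α, 1 ≤ α ∧ RoughlyWeighted χ' α :=
    ⟨m, mod_cast hχ'.one_le_card, hχ'.roughlyWeighted_card⟩
  exact ⟨(mu_le_mu_of_roughlyWeighted_imp hthreshold himp).trans hχ'.mu_le_cS,
    fun α hα hall => himp α hα (hall χ' hχ')⟩
end

section
/- Let f : 2^N → {0,1} with f(∅) = 0 be a function on n voters. Then the critical threshold value μ(f) is rational, and there exist coprime positive integers p and q with 1 ≤ q ≤ p ≤ ⌊(n+2)^{(n+2)/2} / 2^{n+1}⌋ such that μ(f) = p/q. -/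
/-!
`μ(f)` is the optimal value of the linear program "minimise `α` subject to `α ≥ 1`,
`∑_{i∈S} w i ≥ 1` for winning `S` and `α - ∑_{i∈S} w i ≥ 0` for losing `S`", whose
coefficients lie in `{0, ±1}`. The program is feasible when `∅` loses, bounded below, and its
constraint rows have no common kernel, so the minimum is attained at a basic point, where `n + 1`
linearly independent tight constraints `B (w, α) = β` determine the solution. Cramer's rule gives
`μ(f) = det D / det B` with integer determinants, `D` being `B` with its `α`-column replaced by
`β`; up to the signs of its rows `D` is a `0/1` matrix of order `n + 1`. Bordering `1 - 2D` by a
row and a column of ones gives a `±1` matrix of order `n + 2` and determinant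
`(-2)^(n+1) det D`, and AM-GM applied to the eigenvalues of `M Mᵀ` bounds the determinant of a
`±1` matrix `M` of order `k` by `k^(k/2)` (Hadamard).
-/

open Finset

open Matrix

section Determinants

variable {ι : Type*} [Fintype ι]

lemma prod_le_sum_div_card_pow (z : ι → ℝ) (hz : ∀ i, 0 ≤ z i) :
    ∏ i, z i ≤ ((∑ i, z i) / Fintype.card ι) ^ Fintype.card ι := by
  rcases isEmpty_or_nonempty ι with hι | hι
  · simp
  have hk : (0 : ℝ) < Fintype.card ι := by exact_mod_cast Fintype.card_pos
  have amgm := Real.geom_mean_le_arith_mean_weighted univ (fun _ => (Fintype.card ι : ℝ)⁻¹) z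
    (fun _ _ => by positivity) (by simp [hk.ne']) (fun i _ => hz i)
  rw [Real.finsetProd_rpow _ _ (fun i _ => hz i), ← Finset.mul_sum, inv_mul_eq_div] at amgm
  have hprod : 0 ≤ ∏ i, z i := prod_nonneg fun i _ => hz i
  calc ∏ i, z i = ((∏ i, z i) ^ (Fintype.card ι : ℝ)⁻¹) ^ Fintype.card ι :=
        (Real.rpow_inv_natCast_pow hprod Fintype.card_ne_zero).symm
    _ ≤ _ := pow_le_pow_left₀ (Real.rpow_nonneg hprod _) amgm _

lemma det_sq_le_of_forall_eq_one_or_eq_neg_one [DecidableEq ι]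
    (M : Matrix ι ι ℝ) (hM : ∀ i j, M i j = 1 ∨ M i j = -1) :
    M.det ^ 2 ≤ (Fintype.card ι : ℝ) ^ Fintype.card ι := by
  have hG := posSemidef_self_mul_conjTranspose M
  have hdiag : ∀ i, (M * Mᴴ) i i = Fintype.card ι := fun i => by
    simp only [mul_apply, conjTranspose_apply, star_trivial]
    rw [Fintype.card_eq_sum_ones, Nat.cast_sum, Nat.cast_one]
    exact sum_congr rfl fun j _ => by rcases hM i j with h | h <;> simp [h]
  have htrace : ∑ i, hG.1.eigenvalues i = Fintype.card ι * Fintype.card ι := by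
    have := hG.1.trace_eq_sum_eigenvalues
    simp only [RCLike.ofReal_real_eq_id, id, trace, Matrix.diag, hdiag, sum_const, card_univ,
      nsmul_eq_mul] at this
    rw [← this]
  calc M.det ^ 2 = (M * Mᴴ).det := by
        rw [det_mul, det_conjTranspose, star_trivial, sq]
    _ = ∏ i, hG.1.eigenvalues i := by simpa using hG.1.det_eq_prod_eigenvalues
    _ ≤ _ := by
      refine (prod_le_sum_div_card_pow _ hG.eigenvalues_nonneg).trans_eq ?_
      rcases (Fintype.card ι).eq_zero_or_pos with h | h
      · simp [h]
      · rw [htrace, mul_div_cancel_right₀ _ (by positivity)]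

lemma abs_det_le_of_forall_eq_zero_or_eq_one [DecidableEq ι]
    (A : Matrix ι ι ℝ) (hA : ∀ i j, A i j = 0 ∨ A i j = 1) :
    |A.det| ≤
      ((Fintype.card ι : ℝ) + 1) ^ (((Fintype.card ι : ℝ) + 1) / 2) / 2 ^ Fintype.card ι := by
  set k := Fintype.card ι
  let C : Matrix (Unit ⊕ ι) (Unit ⊕ ι) ℝ :=
    fromBlocks 1 (of fun _ _ => 1) (of fun _ _ => 1) (of fun i j => 1 - 2 * A i j)
  have hC : ∀ i j, C i j = 1 ∨ C i j = -1 := by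
    rintro (i | i) (j | j)
    · simp [C]
    · simp [C]
    · simp [C]
    · rcases hA i j with h | h <;> norm_num [C, h]
  have hdetC : C.det = (-2) ^ k * A.det := by
    rw [det_fromBlocks_one₁₁, ← det_smul]
    congr 1
    ext i j
    simp [mul_apply]
  have hsq := det_sq_le_of_forall_eq_one_or_eq_neg_one C hC
  rw [Fintype.card_sum, Fintype.card_unit, hdetC] at hsq
  have hk : ((((1 + k : ℕ) : ℝ)) ^ (1 + k)) = (((k : ℝ) + 1) ^ (((k : ℝ) + 1) / 2)) ^ 2 := by
    rw [← Real.rpow_natCast, ← Real.rpow_natCast _ 2, ← Real.rpow_mul (by positivity)]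
    push_cast
    ring_nf
  rw [hk] at hsq
  have habs := abs_le_of_sq_le_sq hsq (by positivity)
  rw [abs_mul, abs_pow, abs_neg, abs_two] at habs
  rw [le_div_iff₀ (by positivity), mul_comm]
  exact habs

lemma abs_det_le_of_forall_mul_eq_zero_or_eq_one [DecidableEq ι]
    (D : Matrix ι ι ℝ) (s : ι → ℝ) (hs : ∀ i, |s i| = 1)
    (hD : ∀ i j, s i * D i j = 0 ∨ s i * D i j = 1) :
    |D.det| ≤
      ((Fintype.card ι : ℝ) + 1) ^ (((Fintype.card ι : ℝ) + 1) / 2) / 2 ^ Fintype.card ι := by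
  have := abs_det_le_of_forall_eq_zero_or_eq_one (of fun i j => s i * D i j) hD
  rwa [det_mul_column, abs_mul, abs_prod, prod_congr rfl fun i _ => hs i, prod_const_one,
    one_mul] at this

lemma det_mul_eq_det_updateCol [DecidableEq ι] (B : Matrix ι ι ℝ) (x : ι → ℝ) (j : ι) :
    B.det * x j = (B.updateCol j (B *ᵥ x)).det := by
  rw [← cramer_apply, cramer_eq_adjugate_mulVec, mulVec_mulVec, adjugate_mul, smul_mulVec,
    one_mulVec, Pi.smul_apply, smul_eq_mul]

lemma exists_det_eq_intCast [DecidableEq ι] (M : Matrix ι ι ℝ)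
    (hM : ∀ i j, ∃ z : ℤ, M i j = z) : ∃ z : ℤ, M.det = z := by
  choose Z hZ using hM
  refine ⟨(of Z).det, ?_⟩
  rw [Int.cast_det]
  congr 1
  ext i j
  exact hZ i j

lemma exists_coprime_eq_div_of_intCast_mul_eq {μ : ℝ} {p₀ q₀ : ℤ} (hq₀ : q₀ ≠ 0)
    (h : q₀ * μ = p₀) (hμ : 1 ≤ μ) :
    ∃ p q : ℕ, 1 ≤ q ∧ q ≤ p ∧ p.Coprime q ∧ p ≤ p₀.natAbs ∧ μ = p / q := by
  have hp₀ : p₀ ≠ 0 := by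
    rintro rfl
    rcases mul_eq_zero.1 (h.trans Int.cast_zero) with h' | h'
    · exact hq₀ (by exact_mod_cast h')
    · linarith
  have hμr : μ = ((p₀ / q₀ : ℚ) : ℝ) := by
    push_cast
    rw [← h, mul_div_cancel_left₀ _ (by exact_mod_cast hq₀)]
  have hdvd : (p₀ / q₀ : ℚ).num ∣ p₀ := by simpa [Rat.divInt_eq_div] using Rat.num_dvd p₀ hq₀
  generalize (p₀ / q₀ : ℚ) = r at hμr hdvd
  have hr : 1 ≤ r := by exact_mod_cast hμr ▸ hμ
  have hden : (r.den : ℤ) ≤ r.num := by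
    rw [← Rat.num_div_den r, le_div_iff₀ (by positivity), one_mul] at hr
    exact_mod_cast hr
  have hnum : 0 < r.num := by have := r.den_pos; omega
  refine ⟨r.num.natAbs, r.den, r.den_pos, by omega, r.reduced,
    Int.natAbs_le_of_dvd_ne_zero hdvd hp₀, ?_⟩
  rw [hμr, Rat.cast_def, Nat.cast_natAbs, abs_of_pos hnum]

end Determinants

section LinearProgram

variable {ι κ : Type*} [Fintype κ]

def polyhedron (a : ι → κ → ℝ) (b : ι → ℝ) : Set (κ → ℝ) := {x | ∀ i, b i ≤ a i ⬝ᵥ x}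

lemma not_bddBelow_of_dotProduct_neg {a : ι → κ → ℝ} {b : ι → ℝ} {c x z : κ → ℝ}
    (hx : x ∈ polyhedron a b)    (hz : ∀ i, 0 ≤ a i ⬝ᵥ z) (hcz : c ⬝ᵥ z < 0) :
    ¬BddBelow ((c ⬝ᵥ ·) '' polyhedron a b) := by
  rintro ⟨m, hm⟩
  have hmem : ∀ t : ℝ, 0 ≤ t → x + t • z ∈ polyhedron a b := fun t ht i => by
    rw [dotProduct_add, dotProduct_smul, smul_eq_mul]
    nlinarith [hx i, hz i]
  have hlow := hm ⟨_, hmem ((c ⬝ᵥ x - m + 1) / -(c ⬝ᵥ z)) ?_, rfl⟩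
  · dsimp only at hlow
    rw [dotProduct_add, dotProduct_smul, smul_eq_mul, div_neg, neg_mul,
      div_mul_cancel₀ _ hcz.ne] at hlow
    linarith
  · have := hm ⟨x, hx, rfl⟩
    exact div_nonneg (by linarith) (by linarith)

variable [Fintype ι]

noncomputable def tightSet (a : ι → κ → ℝ) (b : ι → ℝ) (x : κ → ℝ) : Finset ι :=
  {i | a i ⬝ᵥ x = b i}

def IsBasicPoint (a : ι → κ → ℝ) (b : ι → ℝ) (x : κ → ℝ) : Prop :=
  x ∈ polyhedron a b ∧ ∀ y, (∀ i ∈ tightSet a b x, a i ⬝ᵥ y = 0) → y = 0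

variable {a : ι → κ → ℝ} {b : ι → ℝ} {c : κ → ℝ}

lemma exists_add_smul_mem_polyhedron_tightSet_ssubset {x z : κ → ℝ} (hx : x ∈ polyhedron a b)
    (hz : ∀ i ∈ tightSet a b x, a i ⬝ᵥ z = 0) (hneg : ∃ i, a i ⬝ᵥ z < 0) :
    ∃ t : ℝ, 0 ≤ t ∧ x + t • z ∈ polyhedron a b ∧ tightSet a b x ⊂ tightSet a b (x + t • z) := by
  -- step until the first constraint decreasing along `z` becomes tight
  let slack i := (a i ⬝ᵥ x - b i) / -(a i ⬝ᵥ z)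
  obtain ⟨j, hj, hjmin⟩ := exists_min_image {i | a i ⬝ᵥ z < 0} slack
    (by simpa [Finset.Nonempty] using hneg)
  simp only [Finset.mem_filter, Finset.mem_univ, true_and] at hj hjmin
  have hslack : ∀ i, a i ⬝ᵥ z < 0 → slack i * (a i ⬝ᵥ z) = b i - a i ⬝ᵥ x := fun i hi => by
    simp only [slack]
    rw [div_neg, neg_mul, div_mul_cancel₀ _ hi.ne, neg_sub]
  have ht : 0 ≤ slack j := div_nonneg (by linarith [hx j]) (by linarith)
  refine ⟨slack j, ht, fun i => ?_, ?_⟩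
  · rw [dotProduct_add, dotProduct_smul, smul_eq_mul]
    rcases lt_or_ge (a i ⬝ᵥ z) 0 with hi | hi
    · nlinarith [hjmin i hi, hslack i hi]
    · nlinarith [hx i]
  · refine Finset.ssubset_iff_of_subset (fun i hi => ?_) |>.2 ⟨j, ?_, ?_⟩
    · simp_all [tightSet, dotProduct_add, dotProduct_smul]
    · simp only [tightSet, Finset.mem_filter, Finset.mem_univ, true_and, dotProduct_add,
        dotProduct_smul, smul_eq_mul, hslack j hj]
      ring
    · intro hjx
      linarith [hz j hjx]

lemma exists_descent_direction (hpointed : ∀ y, (∀ i, a i ⬝ᵥ y = 0) → y = 0)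
    (hbdd : BddBelow ((c ⬝ᵥ ·) '' polyhedron a b)) {x : κ → ℝ} (hx : x ∈ polyhedron a b)
    (hbasic : ¬IsBasicPoint a b x) :
    ∃ z, (∀ i ∈ tightSet a b x, a i ⬝ᵥ z = 0) ∧ c ⬝ᵥ z ≤ 0 ∧ ∃ i, a i ⬝ᵥ z < 0 := by
  obtain ⟨y, hy, hy0⟩ : ∃ y, (∀ i ∈ tightSet a b x, a i ⬝ᵥ y = 0) ∧ y ≠ 0 := by
    simpa [IsBasicPoint, hx] using hbasic
  by_contra! hnone
  -- a direction along which no constraint decreases cannot decrease `c`, by boundedness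
  have hflat : ∀ z, (∀ i ∈ tightSet a b x, a i ⬝ᵥ z = 0) → c ⬝ᵥ z ≤ 0 → c ⬝ᵥ z = 0 :=
    fun z hz hcz => hcz.antisymm <| not_lt.1 fun hlt =>
      not_bddBelow_of_dotProduct_neg hx (hnone z hz hcz) hlt hbdd
  have hy' : ∀ i ∈ tightSet a b x, a i ⬝ᵥ -y = 0 := fun i hi => by
    rw [dotProduct_neg, hy i hi, neg_zero]
  wlog hcy : c ⬝ᵥ y ≤ 0 generalizing y
  · exact this (-y) hy' (neg_ne_zero.2 hy0) (by simpa using hy) (by rw [dotProduct_neg]; linarith)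
  have hcy0 := hflat y hy hcy
  refine hy0 (hpointed y fun i => le_antisymm ?_ (hnone y hy hcy i))
  simpa using hnone (-y) hy' (by rw [dotProduct_neg, hcy0, neg_zero]) i

lemma exists_isBasicPoint_le (hpointed : ∀ y, (∀ i, a i ⬝ᵥ y = 0) → y = 0)
    (hbdd : BddBelow ((c ⬝ᵥ ·) '' polyhedron a b)) {x : κ → ℝ} (hx : x ∈ polyhedron a b) :
    ∃ v, IsBasicPoint a b v ∧ c ⬝ᵥ v ≤ c ⬝ᵥ x := by
  induction h : Fintype.card ι - (tightSet a b x).card using Nat.strong_induction_on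
    generalizing x with
  | _ k ih =>
  by_cases hbasic : IsBasicPoint a b x
  · exact ⟨x, hbasic, le_rfl⟩
  obtain ⟨z, hz, hcz, hneg⟩ := exists_descent_direction hpointed hbdd hx hbasic
  obtain ⟨t, ht, hx', hsub⟩ := exists_add_smul_mem_polyhedron_tightSet_ssubset hx hz hneg
  have hlt := Finset.card_lt_card hsub
  have hle := Finset.card_le_univ (tightSet a b (x + t • z))
  obtain ⟨v, hv, hcv⟩ := ih _ (by omega) hx' rfl
  refine ⟨v, hv, hcv.trans ?_⟩
  rw [dotProduct_add, dotProduct_smul, smul_eq_mul]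
  nlinarith

lemma finite_setOf_isBasicPoint : {x | IsBasicPoint a b x}.Finite := by
  refine Set.Finite.of_finite_image (f := tightSet a b) (Set.toFinite _)
    fun x hx x' hx' h => ?_
  refine sub_eq_zero.1 (hx.2 _ fun i hi => ?_)
  have hi' : i ∈ tightSet a b x' := h ▸ hi
  simp only [tightSet, Finset.mem_filter, Finset.mem_univ, true_and] at hi hi'
  rw [dotProduct_sub, hi, hi', sub_self]

theorem exists_isBasicPoint_isMinOn (hpointed : ∀ y, (∀ i, a i ⬝ᵥ y = 0) → y = 0)
    (hne : (polyhedron a b).Nonempty) (hbdd : BddBelow ((c ⬝ᵥ ·) '' polyhedron a b)) :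
    ∃ x, IsBasicPoint a b x ∧ IsMinOn (c ⬝ᵥ ·) (polyhedron a b) x := by
  obtain ⟨x₀, hx₀⟩ := hne
  obtain ⟨v₀, hv₀, -⟩ := exists_isBasicPoint_le hpointed hbdd hx₀
  obtain ⟨x, hx, hmin⟩ :=
    Set.exists_min_image _ (c ⬝ᵥ ·) finite_setOf_isBasicPoint ⟨v₀, hv₀⟩
  refine ⟨x, hx, fun y hy => ?_⟩
  obtain ⟨v, hv, hcv⟩ := exists_isBasicPoint_le hpointed hbdd hy
  exact (hmin v hv).trans hcv

lemma span_eq_top_of_forall_dotProduct_eq_zero [DecidableEq κ] {s : Set (κ → ℝ)}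
    (h : ∀ y, (∀ v ∈ s, v ⬝ᵥ y = 0) → y = 0) : Submodule.span ℝ s = ⊤ := by
  have := Submodule.span_eq_top_of_ne_zero (R := ℝ) (s := dotProductEquiv ℝ κ '' s)
    fun y hy => by
      by_contra! hzero
      exact hy (h y fun v hv => hzero _ ⟨v, hv, rfl⟩)
  rwa [← LinearEquiv.coe_toLinearMap, Submodule.span_image, Submodule.map_eq_top_iff] at this

lemma IsBasicPoint.exists_isUnit [DecidableEq κ] {x : κ → ℝ} (hx : IsBasicPoint a b x) :
    ∃ g : κ → ι, IsUnit (of fun k => a (g k)) ∧ ∀ k, a (g k) ⬝ᵥ x = b (g k) := by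
  obtain ⟨σ, e, he, hspan, hli⟩ :=
    exists_linearIndependent' ℝ (fun i : tightSet a b x => a i)
  have hspan_top : Submodule.span ℝ (Set.range fun i : tightSet a b x => a i) = ⊤ :=
    span_eq_top_of_forall_dotProduct_eq_zero fun y hy => hx.2 y fun i hi => hy _ ⟨⟨i, hi⟩, rfl⟩
  let E : σ ≃ κ :=
    (Module.Basis.mk hli (hspan.trans hspan_top).ge).indexEquiv (Pi.basisFun ℝ κ)
  refine ⟨fun k => e (E.symm k), ?_, fun k => ?_⟩
  · exact linearIndependent_rows_iff_isUnit.1 (hli.comp E.symm E.symm.injective)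
  · simpa [tightSet] using (e (E.symm k)).2

end LinearProgram

section ThresholdProgram

variable {n : ℕ} (f : Finset (Fin n) → Bool)

def coalitionVector (S : Finset (Fin n)) : Option (Fin n) → ℝ :=
  fun j => j.elim 0 fun i => if i ∈ S then 1 else 0

-- `x none` plays the role of `α` and `x (some i)` that of `w i`; the row `none` is `α ≥ 1`.
def thresholdRow : Option (Finset (Fin n)) → Option (Fin n) → ℝ
  | none => Pi.single none 1
  | some S => if f S then coalitionVector S else Pi.single none 1 - coalitionVector S

def thresholdRhs : Option (Finset (Fin n)) → ℝ
  | none => 1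
  | some S => if f S then 1 else 0

lemma coalitionVector_dotProduct (S : Finset (Fin n)) (x : Option (Fin n) → ℝ) :
    coalitionVector S ⬝ᵥ x = ∑ i ∈ S, x (some i) := by
  simp [dotProduct, coalitionVector, Fintype.sum_option]

lemma exists_thresholdRow_eq_intCast (r : Option (Finset (Fin n))) (j : Option (Fin n)) :
    ∃ z : ℤ, thresholdRow f r j = z := by
  rcases r with _ | S <;> rcases j with _ | i
  · exact ⟨1, by simp [thresholdRow]⟩
  · exact ⟨0, by simp [thresholdRow]⟩
  · exact ⟨if f S then 0 else 1, by cases hS : f S <;> simp [hS, thresholdRow, coalitionVector]⟩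
  · by_cases hi : i ∈ S
    · exact ⟨if f S then 1 else -1,
        by cases hS : f S <;> simp [hS, thresholdRow, coalitionVector, hi]⟩
    · exact ⟨0, by cases hS : f S <;> simp [hS, thresholdRow, coalitionVector, hi]⟩

lemma exists_thresholdRhs_eq_intCast (r : Option (Finset (Fin n))) :
    ∃ z : ℤ, thresholdRhs f r = z := by
  rcases r with _ | S
  · exact ⟨1, by simp [thresholdRhs]⟩
  · exact ⟨if f S then 1 else 0, by cases hS : f S <;> simp [hS, thresholdRhs]⟩

-- These are the rows of the matrix of Cramer's rule for the coordinate `α`.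
lemma exists_sign_update_thresholdRow (r : Option (Finset (Fin n))) :
    ∃ s : ℝ, |s| = 1 ∧ ∀ j,
      s * Function.update (thresholdRow f r) none (thresholdRhs f r) j = 0 ∨
        s * Function.update (thresholdRow f r) none (thresholdRhs f r) j = 1 := by
  rcases r with _ | S
  · refine ⟨1, abs_one, fun j => ?_⟩
    rcases j with _ | i <;> simp [thresholdRow, thresholdRhs]
  · refine ⟨if f S then 1 else -1, by cases hS : f S <;> simp, fun j => ?_⟩
    rcases j with _ | i
    · cases hS : f S <;> simp [hS, thresholdRhs]
    · by_cases hi : i ∈ S <;> cases hS : f S <;> simp [hS, thresholdRow, coalitionVector, hi]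

lemma mem_polyhedron_thresholdRow_iff (x : Option (Fin n) → ℝ) :
    x ∈ polyhedron (thresholdRow f) (thresholdRhs f) ↔ 1 ≤ x none ∧
      (∀ S, f S = true → 1 ≤ ∑ i ∈ S, x (some i)) ∧
      ∀ S, f S = false → ∑ i ∈ S, x (some i) ≤ x none := by
  simp only [polyhedron, Set.mem_ofPred_eq, Option.forall, thresholdRow, thresholdRhs,
    single_dotProduct, one_mul, ← forall_and]
  refine and_congr_right fun _ => forall_congr' fun S => ?_
  cases hS : f S <;> simp [coalitionVector_dotProduct, sub_dotProduct]

lemma image_polyhedron_thresholdRow :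
    (fun x => x none) '' polyhedron (thresholdRow f) (thresholdRhs f) =
      {α | 1 ≤ α ∧ RoughlyWeighted f α} := by
  ext α
  simp only [Set.mem_image, mem_polyhedron_thresholdRow_iff, Set.mem_ofPred_eq, RoughlyWeighted]
  constructor
  · rintro ⟨x, ⟨h1, hwin, hlose⟩, rfl⟩
    exact ⟨h1, fun i => x (some i), hwin, hlose⟩
  · rintro ⟨h1, w, hwin, hlose⟩
    exact ⟨fun j => j.elim α w, ⟨h1, hwin, hlose⟩, rfl⟩

lemma roughlyWeighted_natCast_add_one (hf : f ∅ = false) : RoughlyWeighted f (n + 1) := by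
  refine ⟨fun _ => 1, fun S hS => ?_, fun S _ => ?_⟩
  · have : S.Nonempty := nonempty_iff_ne_empty.2 (by rintro rfl; simp [hf] at hS)
    simpa using this.card_pos
  · have := card_le_univ S
    simp only [sum_const, nsmul_eq_mul, mul_one, Fintype.card_fin] at this ⊢
    linarith [(Nat.cast_le (α := ℝ)).2 this]

lemma thresholdRow_pointed (y : Option (Fin n) → ℝ) (hy : ∀ r, thresholdRow f r ⬝ᵥ y = 0) :
    y = 0 := by
  have hnone : y none = 0 := by simpa [thresholdRow] using hy none
  funext j
  rcases j with _ | i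
  · exact hnone
  · have := hy (some {i})
    cases hS : f {i} <;> simp_all [thresholdRow, coalitionVector_dotProduct, sub_dotProduct]

lemma polyhedron_thresholdRow_nonempty (hf : f ∅ = false) :
    (polyhedron (thresholdRow f) (thresholdRhs f)).Nonempty := by
  have : (n + 1 : ℝ) ∈ (fun x => x none) '' polyhedron (thresholdRow f) (thresholdRhs f) := by
    rw [image_polyhedron_thresholdRow]
    exact ⟨by linarith [(n.cast_nonneg : (0 : ℝ) ≤ n)], roughlyWeighted_natCast_add_one f hf⟩
  exact this.elim fun x hx => ⟨x, hx.1⟩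

lemma bddBelow_image_polyhedron_thresholdRow :
    BddBelow ((Pi.single none 1 ⬝ᵥ ·) '' polyhedron (thresholdRow f) (thresholdRhs f)) := by
  refine ⟨1, ?_⟩
  rintro _ ⟨x, hx, rfl⟩
  simpa [single_dotProduct] using ((mem_polyhedron_thresholdRow_iff f x).1 hx).1

lemma mu_eq_of_isMinOn {x : Option (Fin n) → ℝ}
    (hx : x ∈ polyhedron (thresholdRow f) (thresholdRhs f))
    (hmin : IsMinOn (Pi.single none 1 ⬝ᵥ ·) (polyhedron (thresholdRow f) (thresholdRhs f)) x) :
    mu f = x none := by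
  rw [mu, ← image_polyhedron_thresholdRow]
  refine IsLeast.csInf_eq ⟨⟨x, hx, rfl⟩, ?_⟩
  rintro _ ⟨y, hy, rfl⟩
  simpa [single_dotProduct] using isMinOn_iff.1 hmin y hy

lemma IsBasicPoint.exists_coprime_eq_div_of_thresholdRow {x : Option (Fin n) → ℝ}
    (hx : IsBasicPoint (thresholdRow f) (thresholdRhs f) x) :
    ∃ p q : ℕ, 1 ≤ q ∧ q ≤ p ∧ p.Coprime q ∧
      (p : ℝ) ≤ ((n : ℝ) + 2) ^ (((n : ℝ) + 2) / 2) / 2 ^ (n + 1) ∧ x none = p / q := by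
  classical
  obtain ⟨g, hB, htight⟩ := hx.exists_isUnit
  set B : Matrix (Option (Fin n)) (Option (Fin n)) ℝ := of fun k => thresholdRow f (g k)
  set D := B.updateCol none (B *ᵥ x)
  have hD : ∀ k, D k = Function.update (thresholdRow f (g k)) none (thresholdRhs f (g k)) :=
    fun k => by
      ext j
      simp [D, B, updateCol_apply, Function.update_apply, mulVec, htight]
  obtain ⟨zB, hzB⟩ := exists_det_eq_intCast B fun k j => exists_thresholdRow_eq_intCast f (g k) j
  obtain ⟨zD, hzD⟩ := exists_det_eq_intCast D fun k j => by
    rw [hD, Function.update_apply]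
    split_ifs
    exacts [exists_thresholdRhs_eq_intCast f _, exists_thresholdRow_eq_intCast f _ _]
  choose s hs hsD using fun k => exists_sign_update_thresholdRow f (g k)
  have hbound := abs_det_le_of_forall_mul_eq_zero_or_eq_one D s hs fun k j => hD k ▸ hsD k j
  obtain ⟨p, q, hq, hqp, hpq, hp, hxpq⟩ := exists_coprime_eq_div_of_intCast_mul_eq
    (p₀ := zD) (q₀ := zB) (by exact_mod_cast hzB ▸ ((isUnit_iff_isUnit_det B).1 hB).ne_zero)
    (hzB ▸ hzD ▸ det_mul_eq_det_updateCol B x none)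
    ((mem_polyhedron_thresholdRow_iff f x).1 hx.1).1
  refine ⟨p, q, hq, hqp, hpq, ?_, hxpq⟩
  have hcard : (Fintype.card (Option (Fin n)) : ℝ) + 1 = n + 2 := by
    rw [Fintype.card_option, Fintype.card_fin]
    push_cast
    ring
  rw [hcard, Fintype.card_option, Fintype.card_fin, hzD] at hbound
  calc (p : ℝ) ≤ zD.natAbs := by exact_mod_cast hp
    _ = |(zD : ℝ)| := by rw [Nat.cast_natAbs, Int.cast_abs]
    _ ≤ _ := hbound

end ThresholdProgram

/-- the critical threshold value is a rational number `p/q` with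
coprime `1 ≤ q ≤ p ≤ ⌊(n+2)^((n+2)/2) / 2^(n+1)⌋` (Hadamard-type bound). -/
theorem critical_threshold_rational_bounded (n : ℕ)
    (f : Finset (Fin n) → Bool) (hf : f ∅ = false) :
    ∃ p q : ℕ, 1 ≤ q ∧ q ≤ p ∧ Nat.Coprime p q ∧
      p ≤ Nat.floor (((n : ℝ) + 2) ^ (((n : ℝ) + 2) / 2) / 2 ^ (n + 1)) ∧
      mu f = (p : ℝ) / (q : ℝ) := by
  obtain ⟨x, hx, hmin⟩ := exists_isBasicPoint_isMinOn (thresholdRow_pointed f)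
    (polyhedron_thresholdRow_nonempty f hf)
    (bddBelow_image_polyhedron_thresholdRow f)
  obtain ⟨p, q, hq, hqp, hpq, hp, hxpq⟩ := hx.exists_coprime_eq_div_of_thresholdRow f
  exact ⟨p, q, hq, hqp, hpq, Nat.le_floor hp, (mu_eq_of_isMinOn f hx.1 hmin).trans hxpq⟩
end
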